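/- arXiv:2512.21103 — 2 statements merged into one kernel-verified Lean document; each statement's English description precedes it below -/
import Mathlib

section
/- For any graph G with boundary, the Neumann Laplacian operator Δ^N : ℝ^{Ω_G} → ℝ^{Ω_G} satisfies ⟨Δ^N f, g⟩_{Ω_G} = Σ_{{x,y} ∈ E} (F(x) − F(y))(H(x) − H(y)) for all f, g ∈ ℝ^{Ω_G}, where F = Λ(f) and H = Λ(g) are the harmonic-type extensions; in particular Δ^N is self-adjoint and nonnegative with respect to ⟨·,·⟩_{Ω_G}. -/
open Finset
open scoped Classical

noncomputable section

variable {V : Type*} [Fintype V]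

/-- Graph Laplacian `Δf(x) = Σ_{y∼x} (f x - f y)`. -/
def glap (G : SimpleGraph V) (f : V → ℝ) (x : V) : ℝ :=
  ∑ y ∈ G.neighborFinset x, (f x - f y)

/-- Harmonic-type extension `Λ` : keep values on the interior `Ω`, average of
neighbor values on the boundary. -/
def nExt (G : SimpleGraph V) (Ω : Finset V) (f : V → ℝ) (x : V) : ℝ :=
  if x ∈ Ω then f x else (∑ y ∈ G.neighborFinset x, f y) / (G.degree x)

/-- Neumann Laplacian `Δ^N f = Δ(Λ f)` (restricted to the interior). -/
def nLap (G : SimpleGraph V) (Ω : Finset V) (f : V → ℝ) (x : V) : ℝ :=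
  glap G (nExt G Ω f) x

/-! Boundary vertices have only interior neighbours, so at each of them `Λ f` is the mean of the
neighbouring values of `Λ f` and `Δ (Λ f)` vanishes. Hence `⟨Δ^N f, g⟩_Ω` is the sum of
`Δ (Λ f) · Λ g` over all vertices, which the discrete Green identity turns into the Dirichlet form
of `Λ f` and `Λ g`; that form is symmetric and nonnegative. -/

def SimpleGraph.dirichletForm (G : SimpleGraph V) (F H : V → ℝ) : ℝ :=
  (1 / 2) * ∑ x : V, ∑ y : V, if G.Adj x y then (F x - F y) * (H x - H y) else 0

namespace SimpleGraph

variable (G : SimpleGraph V)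

theorem dirichletForm_comm (F H : V → ℝ) : G.dirichletForm F H = G.dirichletForm H F := by
  unfold dirichletForm
  congr 1
  refine sum_congr rfl fun x _ => sum_congr rfl fun y _ => ?_
  split_ifs <;> ring

theorem dirichletForm_self_nonneg (F : V → ℝ) : 0 ≤ G.dirichletForm F F := by
  unfold dirichletForm
  refine mul_nonneg (by norm_num) (sum_nonneg fun x _ => sum_nonneg fun y _ => ?_)
  split_ifs
  exacts [mul_self_nonneg _, le_rfl]

/-- Discrete Green's identity: summing over ordered pairs counts each edge twice, and swapping
the roles of `x` and `y` turns the `H y` half of `(F x - F y) * (H x - H y)` into the `H x` half. -/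
theorem sum_glap_mul (F H : V → ℝ) : ∑ x, glap G F x * H x = G.dirichletForm F H := by
  have hlap : ∑ x, glap G F x * H x =
      ∑ x, ∑ y, if G.Adj x y then (F x - F y) * H x else 0 := by
    simp only [glap, neighborFinset_eq_filter, sum_filter, sum_mul, ite_mul, zero_mul]
  have hswap : ∑ x, ∑ y, (if G.Adj x y then (F x - F y) * -H y else 0) =
      ∑ x, ∑ y, if G.Adj x y then (F x - F y) * H x else 0 := by
    rw [sum_comm]
    refine sum_congr rfl fun x _ => sum_congr rfl fun y _ => ?_
    rw [G.adj_comm]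
    split_ifs <;> ring
  have hsplit : ∑ x, ∑ y, (if G.Adj x y then (F x - F y) * (H x - H y) else 0) =
      ∑ x, ∑ y, (if G.Adj x y then (F x - F y) * H x else 0) +
        ∑ x, ∑ y, if G.Adj x y then (F x - F y) * -H y else 0 := by
    rw [← sum_add_distrib]
    refine sum_congr rfl fun x _ => ?_
    rw [← sum_add_distrib]
    refine sum_congr rfl fun y _ => ?_
    split_ifs <;> ring
  rw [dirichletForm, hsplit, hswap, hlap]
  ring

end SimpleGraph

open SimpleGraph

theorem glap_nExt_eq_zero {G : SimpleGraph V} {Ω : Finset V} {x : V} (hx : x ∉ Ω)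
    (hnbr : ∀ y, G.Adj x y → y ∈ Ω) (f : V → ℝ) : glap G (nExt G Ω f) x = 0 := by
  have hnbr_val : ∀ y ∈ G.neighborFinset x, nExt G Ω f y = f y := fun y hy =>
    if_pos (hnbr y ((G.mem_neighborFinset x y).1 hy))
  rcases eq_or_ne (G.degree x) 0 with hdeg | hdeg
  · rw [← card_neighborFinset_eq_degree, card_eq_zero] at hdeg
    simp [glap, hdeg]
  · rw [glap, sum_sub_distrib, sum_const, card_neighborFinset_eq_degree, sum_congr rfl hnbr_val,
      nsmul_eq_mul, nExt, if_neg hx]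
    field_simp
    ring

theorem sum_nLap_mul {G : SimpleGraph V} {Ω : Finset V}
    (hB : ∀ x : V, x ∉ Ω → ∀ y : V, y ∉ Ω → ¬ G.Adj x y) (f g : V → ℝ) :
    ∑ x ∈ Ω, nLap G Ω f x * g x = G.dirichletForm (nExt G Ω f) (nExt G Ω g) := by
  rw [← G.sum_glap_mul, ← sum_subset (subset_univ Ω)]
  · exact sum_congr rfl fun x hx => by rw [nLap, nExt, if_pos hx]
  · intro x _ hx
    rw [glap_nExt_eq_zero hx (fun y hxy => by_contra fun hy => hB x hx y hy hxy), zero_mul]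

theorem stmt_3_general (G : SimpleGraph V)
    (Ω : Finset V)
    (hB2 : ∀ x : V, x ∉ Ω → ∀ y : V, y ∉ Ω → ¬ G.Adj x y) :
    (∀ f g : V → ℝ,
      ∑ x ∈ Ω, nLap G Ω f x * g x =
        (1 / 2) * ∑ x : V, ∑ y : V, if G.Adj x y then
          (nExt G Ω f x - nExt G Ω f y) * (nExt G Ω g x - nExt G Ω g y) else 0) ∧
    (∀ f g : V → ℝ,
      ∑ x ∈ Ω, nLap G Ω f x * g x = ∑ x ∈ Ω, f x * nLap G Ω g x) ∧
    (∀ f : V → ℝ, 0 ≤ ∑ x ∈ Ω, nLap G Ω f x * f x) := by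
  refine ⟨sum_nLap_mul hB2, fun f g => ?_, fun f => ?_⟩
  · simp only [mul_comm (f _)]
    rw [sum_nLap_mul hB2, sum_nLap_mul hB2, dirichletForm_comm]
  · rw [sum_nLap_mul hB2]
    exact G.dirichletForm_self_nonneg _

/-- `⟨Δ^N f, g⟩_Ω = Σ_{{x,y}∈E} (F x − F y)(H x − H y)` with
`F = Λ f`, `H = Λ g`; in particular `Δ^N` is self-adjoint and nonnegative
w.r.t. `⟨·,·⟩_Ω`. -/
theorem stmt_3 (G : SimpleGraph V) (hconn : G.Connected)
    (Ω : Finset V)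
    (hB1 : ∀ x : V, x ∉ Ω → ∃ y ∈ Ω, G.Adj x y)
    (hB2 : ∀ x : V, x ∉ Ω → ∀ y : V, y ∉ Ω → ¬ G.Adj x y) :
    (∀ f g : V → ℝ,
      ∑ x ∈ Ω, nLap G Ω f x * g x =
        (1 / 2) * ∑ x : V, ∑ y : V, if G.Adj x y then
          (nExt G Ω f x - nExt G Ω f y) * (nExt G Ω g x - nExt G Ω g y) else 0) ∧
    (∀ f g : V → ℝ,
      ∑ x ∈ Ω, nLap G Ω f x * g x = ∑ x ∈ Ω, f x * nLap G Ω g x) ∧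
    (∀ f : V → ℝ, 0 ≤ ∑ x ∈ Ω, nLap G Ω f x * f x) :=
  stmt_3_general G Ω hB2
end
end

section
/- Let G be a connected graph with boundary and let f be an eigenfunction corresponding to a nonzero Neumann eigenvalue λ_i(G), i ≥ 2. Then the maximum and the minimum of the values of f over all vertices are both attained at interior vertices; moreover the maximum value of f is strictly positive and the minimum value is strictly negative. -/
open Finset
open scoped Classical

noncomputable section

variable {V : Type*} [Fintype V]

lemma aux_max (G : SimpleGraph V) (Ω : Finset V)
    (hB1 : ∀ x : V, x ∉ Ω → ∃ y ∈ Ω, G.Adj x y)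
    (f : V → ℝ)
    (hneu : ∀ x : V, x ∉ Ω → ∑ y ∈ G.neighborFinset x, (f x - f y) = 0)
    (hnz : ∃ x ∈ Ω, f x ≠ 0)
    (horth : ∑ x ∈ Ω, f x = 0) :
    ∃ x ∈ Ω, (∀ y : V, f y ≤ f x) ∧ 0 < f x := by
  obtain ⟨x₀, hx₀, hfx₀⟩ := hnz
  haveI : Nonempty V := ⟨x₀⟩
  obtain ⟨a, -, ha⟩ := Finset.exists_max_image (univ : Finset V) f ⟨x₀, mem_univ x₀⟩
  have hmax : ∀ y, f y ≤ f a := fun y => ha y (mem_univ y)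
  -- there is a positive value in Ω
  have hpos : ∃ x ∈ Ω, 0 < f x := by
    by_contra h
    push_neg at h
    have hall : ∀ x ∈ Ω, f x = 0 :=
      (Finset.sum_eq_zero_iff_of_nonpos h).mp horth
    exact hfx₀ (hall x₀ hx₀)
  obtain ⟨p, hpΩ, hp⟩ := hpos
  have hapos : 0 < f a := lt_of_lt_of_le hp (hmax p)
  by_cases haΩ : a ∈ Ω
  · exact ⟨a, haΩ, hmax, hapos⟩
  · -- a is a boundary vertex; Neumann condition forces neighbors to share the max
    obtain ⟨b, hbΩ, hab⟩ := hB1 a haΩ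
    have hsum := hneu a haΩ
    have hnn : ∀ y ∈ G.neighborFinset a, 0 ≤ f a - f y := fun y _ =>
      sub_nonneg.mpr (hmax y)
    have hzero : ∀ y ∈ G.neighborFinset a, f a - f y = 0 :=
      (Finset.sum_eq_zero_iff_of_nonneg hnn).mp hsum
    have hb : f a - f b = 0 := hzero b (by
      rw [SimpleGraph.mem_neighborFinset]; exact hab)
    have hfb : f b = f a := by linarith
    exact ⟨b, hbΩ, fun y => hfb ▸ hmax y, hfb ▸ hapos⟩

/-- An eigenfunction for a nonzero Neumann eigenvalue attains its
maximum and minimum over all vertices at interior vertices; the maximum is strictly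
positive and the minimum strictly negative. -/
theorem stmt_16 (G : SimpleGraph V) (hconn : G.Connected)
    (Ω : Finset V)
    (hB1 : ∀ x : V, x ∉ Ω → ∃ y ∈ Ω, G.Adj x y)
    (hB2 : ∀ x : V, x ∉ Ω → ∀ y : V, y ∉ Ω → ¬ G.Adj x y)
    (f : V → ℝ) (μ : ℝ) (hμ : μ ≠ 0)
    (heig : ∀ x ∈ Ω, glap G f x = μ * f x)
    (hneu : ∀ x : V, x ∉ Ω → ∑ y ∈ G.neighborFinset x, (f x - f y) = 0)
    (hnz : ∃ x ∈ Ω, f x ≠ 0)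
    (horth : ∑ x ∈ Ω, f x = 0) :
    (∃ x ∈ Ω, (∀ y : V, f y ≤ f x) ∧ 0 < f x) ∧
    (∃ x ∈ Ω, (∀ y : V, f x ≤ f y) ∧ f x < 0) := by
  constructor
  · exact aux_max G Ω hB1 f hneu hnz horth
  · have h := aux_max G Ω hB1 (fun v => -f v)
      (fun x hx => by
        have := hneu x hx
        simp only [neg_sub_neg]
        calc ∑ y ∈ G.neighborFinset x, (f y - f x)
            = -∑ y ∈ G.neighborFinset x, (f x - f y) := by
              rw [← Finset.sum_neg_distrib]; simp [neg_sub]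
          _ = 0 := by rw [this, neg_zero])
      (by obtain ⟨x, hx, hfx⟩ := hnz; exact ⟨x, hx, by simpa using hfx⟩)
      (by simpa using horth)
    obtain ⟨x, hxΩ, hle, hpos⟩ := h
    exact ⟨x, hxΩ, fun y => by have := hle y; linarith, by linarith⟩
end
end
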